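/- arXiv:1711.01411 — 2 statements merged into one kernel-verified Lean document; each statement's English description precedes it below -/
import Mathlib

section
/- Fix integers p ≥ 3 and q ≥ 2 with q ≡ 1 (mod p). For all non-negative integers x and y, the Grundy value of (x,y) in the (p,q)-restricted Ryūō Nim is: 𝒢(x,y) = q if x ≡ 0 (mod q), y ≡ 0 (mod q), x ≠ 0 and y ≠ 0; and otherwise 𝒢(x,y) = mod(mod(x,q) + mod(y,q), p) + p·(⌊mod(x,q)/p⌋ ⊕ ⌊mod(y,q)/p⌋). -/
/-- The minimum excluded value of a set of natural numbers. -/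
noncomputable def mex (S : Set ℕ) : ℕ := sInf {n : ℕ | n ∉ S}

/-- Moves of the restricted Ryūō Nim: diagonal moves remove a total of at most
`p - 1` tokens, horizontal moves remove at most `q - 1` tokens, and vertical
moves remove at most `r - 1` tokens. -/
def resMove (p q r : ℕ) (pos : ℕ × ℕ) : Set (ℕ × ℕ) :=
  {a | ∃ s : ℕ, 1 ≤ s ∧ s ≤ pos.1 ∧ s ≤ q - 1 ∧ a = (pos.1 - s, pos.2)} ∪
  {a | ∃ t : ℕ, 1 ≤ t ∧ t ≤ pos.2 ∧ t ≤ r - 1 ∧ a = (pos.1, pos.2 - t)} ∪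
  {a | ∃ s t : ℕ, 1 ≤ s ∧ s ≤ pos.1 ∧ 1 ≤ t ∧ t ≤ pos.2 ∧ s + t ≤ p - 1 ∧
        a = (pos.1 - s, pos.2 - t)}

/-!
Write `a = x % q`, `b = y % q` and cut residues into blocks of length `p`: off the corners
(both coordinates nonzero multiples of `q`) the claimed value is `blockNim p a b`, which nim-adds
the block indices and adds the offsets modulo `p`. Since `q ≡ 1 (mod p)`, a pile whose residue
wraps past a multiple of `q` shifts the offset sum by `+1 (mod p)`; hence a diagonal move, removing
`2 ≤ s + t ≤ p - 1` tokens, always changes the value modulo `p`, while a single-pile move changes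
one residue and `blockNim p · b` is injective. Conversely, a smaller value is reached by lowering
one residue nim-style into a smaller block or, within the same blocks, by lowering both offsets by
at most `p - 1` in total. When that would land on a corner (only possible for the value `0`), a
move wrapping one pile to the residue that cancels the other one is used instead. So the formula
satisfies the mex recursion, whose solution is unique.
-/

theorem mex_eq_of_notMem_of_forall_lt_mem {S : Set ℕ} {n : ℕ} (hn : n ∉ S)
    (hlt : ∀ m < n, m ∈ S) : mex S = n :=
  le_antisymm (Nat.sInf_le hn) (le_csInf ⟨n, hn⟩ fun _ hm => not_lt.1 fun h => hm (hlt _ h))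

theorem eq_of_forall_eq_mex_image {α : Type*} (moves : α → Set α) (rank : α → ℕ)
    (hrank : ∀ a, ∀ b ∈ moves a, rank b < rank a) {G V : α → ℕ}
    (hG : ∀ a, G a = mex (G '' moves a)) (hV : ∀ a, V a = mex (V '' moves a)) : G = V := by
  funext a
  induction a using (measure rank).wf.induction with
  | _ a ih =>
    rw [hG, hV]
    exact congrArg mex (Set.image_congr fun b hb => ih b (hrank a b hb))

section Moves

variable {p q r x y : ℕ}

theorem resMove_sum_lt {pos z : ℕ × ℕ} (hz : z ∈ resMove p q r pos) :
    z.1 + z.2 < pos.1 + pos.2 := by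
  rcases hz with (⟨s, hs, hsx, -, rfl⟩ | ⟨t, ht, hty, -, rfl⟩) |
    ⟨s, t, hs, hsx, ht, hty, -, rfl⟩ <;> dsimp only <;> omega

theorem swap_mem_resMove {z : ℕ × ℕ} (hz : z ∈ resMove p q q (y, x)) :
    z.swap ∈ resMove p q q (x, y) := by
  rcases hz with (⟨s, h₁, h₂, h₃, rfl⟩ | ⟨t, h₁, h₂, h₃, rfl⟩) | ⟨s, t, h₁, h₂, h₃, h₄, h₅, rfl⟩
  · exact .inl (.inr ⟨s, h₁, h₂, h₃, rfl⟩)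
  · exact .inl (.inl ⟨t, h₁, h₂, h₃, rfl⟩)
  · exact .inr ⟨t, s, h₃, h₄, h₁, h₂, by omega, rfl⟩

theorem sub_mem_resMove {s t : ℕ} (hst : 0 < s + t) (hsx : s ≤ x) (hty : t ≤ y) (hsq : s < q)
    (htr : t < r) (h : s = 0 ∨ t = 0 ∨ s + t < p) : (x - s, y - t) ∈ resMove p q r (x, y) := by
  rcases Nat.eq_zero_or_pos s with rfl | hs
  · exact .inl (.inr ⟨t, by omega, hty, by omega, by simp⟩)
  rcases Nat.eq_zero_or_pos t with rfl | ht
  · exact .inl (.inl ⟨s, hs, hsx, by omega, by simp⟩)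
  exact .inr ⟨s, t, hs, hsx, ht, hty, by omega, rfl⟩

end Moves

section Residues

variable {p q x s : ℕ}

theorem lt_of_mod_eq_one (hq : 2 ≤ q) (hqp : q % p = 1) : p < q := by
  by_contra! h
  rcases h.eq_or_lt with rfl | h
  · simp at hqp
  · rw [Nat.mod_eq_of_lt h] at hqp
    omega

theorem le_of_mod_eq_zero_of_ne_zero (h : x % q = 0) (hx : x ≠ 0) : q ≤ x :=
  Nat.le_of_dvd (Nat.pos_of_ne_zero hx) (Nat.dvd_of_mod_eq_zero h)

theorem sub_mod_of_le_mod (h : s ≤ x % q) : (x - s) % q = x % q - s := by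
  rcases Nat.eq_zero_or_pos q with rfl | hq
  · simp
  have hx := Nat.div_add_mod x q
  rw [show x - s = q * (x / q) + (x % q - s) by omega, Nat.mul_add_mod,
    Nat.mod_eq_of_lt (by have := Nat.mod_lt x hq; omega)]

theorem sub_mod_of_mod_lt (h : x % q < s) (hsx : s ≤ x) (hsq : s ≤ q) :
    (x - s) % q = x % q + q - s := by
  have hx := Nat.div_add_mod x q
  obtain ⟨m, hm⟩ : ∃ m, x / q = m + 1 :=
    Nat.exists_eq_add_one.2 (Nat.pos_of_ne_zero fun h0 => by rw [h0] at hx; omega)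
  rw [hm, mul_add, mul_one] at hx
  rw [show x - s = q * m + (x % q + q - s) by omega, Nat.mul_add_mod, Nat.mod_eq_of_lt (by omega)]

theorem sub_mod_add_eq (hsx : s ≤ x) (hsq : s ≤ q) :
    (x - s) % q + s = x % q ∨ (x - s) % q + s = x % q + q := by
  by_cases h : s ≤ x % q
  · exact .inl (by rw [sub_mod_of_le_mod h]; omega)
  · exact .inr (by rw [sub_mod_of_mod_lt (by omega) hsx hsq]; omega)

end Residues

def blockNim (p a b : ℕ) : ℕ := (a + b) % p + p * (a / p ^^^ b / p)

def blockNimPreimage (p b w : ℕ) : ℕ := p * (w / p ^^^ b / p) + (w % p + p - b % p) % p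

section BlockNim

variable {p a b w : ℕ}

theorem blockNim_mod (p a b : ℕ) : blockNim p a b % p = (a + b) % p := by
  rw [blockNim, Nat.add_mul_mod_self_left, Nat.mod_mod]

theorem blockNim_div (hp : 0 < p) (a b : ℕ) : blockNim p a b / p = a / p ^^^ b / p := by
  rw [blockNim, Nat.add_mul_div_left _ _ hp, Nat.div_eq_of_lt (Nat.mod_lt _ hp), zero_add]

theorem blockNim_eq_iff (hp : 0 < p) :
    blockNim p a b = w ↔ (a + b) % p = w % p ∧ a / p ^^^ b / p = w / p := by
  constructor
  · rintro rfl
    exact ⟨(blockNim_mod p a b).symm, (blockNim_div hp a b).symm⟩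
  · rintro ⟨hmod, hdiv⟩
    rw [blockNim, hmod, hdiv, Nat.mod_add_div]

theorem blockNim_comm (p a b : ℕ) : blockNim p a b = blockNim p b a := by
  rw [blockNim, blockNim, Nat.add_comm a, Nat.xor_comm]

theorem blockNim_zero_right (p a : ℕ) : blockNim p a 0 = a := by
  simp [blockNim, Nat.mod_add_div]

theorem blockNim_left_injective (hp : 0 < p) (b : ℕ) : Function.Injective (blockNim p · b) := by
  intro a a' h
  have hmod : (a + b) % p = (a' + b) % p := by
    simpa only [blockNim_mod] using congrArg (· % p) h
  have hdiv : a / p = a' / p := by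
    simpa only [blockNim_div hp, Nat.xor_left_inj] using congrArg (· / p) h
  have hmod' : a % p = a' % p := Nat.ModEq.add_right_cancel' b hmod
  rw [← Nat.div_add_mod a p, ← Nat.div_add_mod a' p, hdiv, hmod']

theorem blockNimPreimage_div (hp : 0 < p) (b w : ℕ) :
    blockNimPreimage p b w / p = w / p ^^^ b / p := by
  rw [blockNimPreimage, Nat.mul_add_div hp, Nat.div_eq_of_lt (Nat.mod_lt _ hp), add_zero]

theorem blockNim_blockNimPreimage (hp : 0 < p) (b w : ℕ) :
    blockNim p (blockNimPreimage p b w) b = w := by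
  rw [blockNim_eq_iff hp, blockNimPreimage_div hp, xor_cancel_right]
  refine ⟨?_, rfl⟩
  have hb := Nat.div_add_mod b p
  have hbp := Nat.mod_lt b hp
  rw [blockNimPreimage, add_assoc, Nat.mul_add_mod, Nat.mod_add_mod,
    show w % p + p - b % p + b = w % p + p * (1 + b / p) by rw [mul_add]; omega,
    Nat.add_mul_mod_self_left, Nat.mod_mod]

theorem blockNimPreimage_lt (hp : 0 < p) (h : w / p ^^^ b / p < a / p) :
    blockNimPreimage p b w < a := by
  have hlt : blockNimPreimage p b w < p * ((w / p ^^^ b / p) + 1) := by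
    rw [blockNimPreimage, mul_add, mul_one]
    have := Nat.mod_lt (w % p + p - b % p) hp
    omega
  calc blockNimPreimage p b w < p * ((w / p ^^^ b / p) + 1) := hlt
    _ ≤ p * (a / p) := Nat.mul_le_mul_left p h
    _ ≤ a := Nat.mul_div_le a p

theorem blockNimPreimage_zero_lt {q : ℕ} (hp : 0 < p) (hqp : q % p = 1) (ha : a < q) :
    blockNimPreimage p a 0 < q := by
  have hq := Nat.div_add_mod q p
  have ha' := Nat.div_add_mod a p
  simp only [blockNimPreimage, Nat.zero_div, Nat.zero_xor, Nat.zero_mod, zero_add]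
  rcases Nat.eq_zero_or_pos (a % p) with h0 | h0
  · rw [h0, Nat.sub_zero, Nat.mod_self]
    omega
  · have hblock : a / p < q / p := Nat.lt_of_mul_lt_mul_left (a := p) (by omega)
    have := Nat.mul_le_mul_left p (Nat.succ_le_of_lt hblock)
    rw [Nat.mul_succ] at this
    rw [Nat.mod_eq_of_lt (by omega)]
    omega

theorem lt_blockNimPreimage_zero (hp : 0 < p) (ha : 0 < a) (hb : b = 0 ∨ a + b < p) :
    b < blockNimPreimage p a 0 := by
  simp only [blockNimPreimage, Nat.zero_div, Nat.zero_xor, Nat.zero_mod, zero_add]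
  rcases lt_or_ge a p with hap | hap
  · rw [Nat.div_eq_of_lt hap, Nat.mod_eq_of_lt hap, Nat.mod_eq_of_lt (by omega)]
    omega
  · have := Nat.mul_le_mul_left p ((Nat.one_le_div_iff hp).2 hap)
    omega

end BlockNim

theorem exists_sub_sub_blockNim_eq {p a b w : ℕ} (hp : 0 < p) (hdiv : w / p = a / p ^^^ b / p)
    (hmod : w % p < (a + b) % p) :
    ∃ s t, s ≤ a ∧ t ≤ b ∧ s + t < p ∧ blockNim p (a - s) (b - t) = w := by
  have ha := Nat.div_add_mod a p
  have hb := Nat.div_add_mod b p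
  have hab := Nat.div_add_mod (a + b) p
  have hap := Nat.mod_lt a hp
  have hbp := Nat.mod_lt b hp
  have habp := Nat.mod_lt (a + b) hp
  have hsum : (a + b) % p ≤ a % p + b % p := by
    rw [Nat.add_mod]
    exact Nat.mod_le _ _
  obtain ⟨s, t, hsa, htb, hst⟩ : ∃ s t, s ≤ a % p ∧ t ≤ b % p ∧ s + t = (a + b) % p - w % p :=
    ⟨min (a % p) ((a + b) % p - w % p), (a + b) % p - w % p - min (a % p) ((a + b) % p - w % p),
      by omega, by omega, by omega⟩
  have hdiva : (a - s) / p = a / p := by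
    rw [show a - s = a % p - s + p * (a / p) by omega, Nat.add_mul_div_left _ _ hp,
      Nat.div_eq_of_lt (by omega), zero_add]
  have hdivb : (b - t) / p = b / p := by
    rw [show b - t = b % p - t + p * (b / p) by omega, Nat.add_mul_div_left _ _ hp,
      Nat.div_eq_of_lt (by omega), zero_add]
  refine ⟨s, t, by omega, by omega, by omega, ?_⟩
  rw [blockNim_eq_iff hp, hdiv, hdiva, hdivb,
    show a - s + (b - t) = w % p + p * ((a + b) / p) by omega, Nat.add_mul_mod_self_left,
    Nat.mod_mod]
  exact ⟨rfl, rfl⟩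

theorem exists_blockNim_eq_of_lt {p a b w : ℕ} (hp : 0 < p) (hw : w < blockNim p a b) :
    ∃ a' ≤ a, ∃ b' ≤ b, (a' = a ∨ b' = b ∨ a - a' + (b - b') < p) ∧ blockNim p a' b' = w := by
  have hw' := Nat.div_add_mod w p
  rw [blockNim] at hw
  rcases lt_trichotomy (w / p) (a / p ^^^ b / p) with hlt | heq | hgt
  · rcases Nat.lt_xor_cases hlt with h | h
    · exact ⟨_, (blockNimPreimage_lt hp h).le, b, le_rfl, .inr (.inl rfl),
        blockNim_blockNimPreimage hp b w⟩
    · refine ⟨a, le_rfl, _, (blockNimPreimage_lt hp h).le, .inl rfl, ?_⟩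
      rw [blockNim_comm, blockNim_blockNimPreimage hp a w]
  · obtain ⟨s, t, hsa, htb, hst, hval⟩ :=
      exists_sub_sub_blockNim_eq hp heq (by rw [← heq] at hw; omega)
    exact ⟨a - s, by omega, b - t, by omega, .inr (.inr (by omega)), hval⟩
  · have := Nat.mul_le_mul_left p (Nat.succ_le_of_lt hgt)
    rw [Nat.mul_succ] at this
    have := Nat.mod_lt (a + b) hp
    omega

def ryuoGrundy (p q x y : ℕ) : ℕ :=
  if x % q = 0 ∧ y % q = 0 ∧ x ≠ 0 ∧ y ≠ 0 then q else blockNim p (x % q) (y % q)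

section RyuoGrundy

variable {p q x y : ℕ}

theorem ryuoGrundy_of_corner (h : x % q = 0 ∧ y % q = 0 ∧ x ≠ 0 ∧ y ≠ 0) :
    ryuoGrundy p q x y = q :=
  if_pos h

theorem ryuoGrundy_of_not_corner (h : ¬(x % q = 0 ∧ y % q = 0 ∧ x ≠ 0 ∧ y ≠ 0)) :
    ryuoGrundy p q x y = blockNim p (x % q) (y % q) :=
  if_neg h

theorem ryuoGrundy_comm (p q x y : ℕ) : ryuoGrundy p q x y = ryuoGrundy p q y x := by
  unfold ryuoGrundy
  rw [blockNim_comm]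
  exact if_congr (by tauto) rfl rfl

theorem ryuoGrundy_sub_left_ne {s : ℕ} (hp : 0 < p) (hs : 0 < s) (hsx : s ≤ x) (hsq : s < q) :
    ryuoGrundy p q (x - s) y ≠ ryuoGrundy p q x y := by
  have hx := sub_mod_add_eq hsx hsq.le
  have ha := Nat.mod_lt x (by omega : 0 < q)
  have ha' := Nat.mod_lt (x - s) (by omega : 0 < q)
  by_cases hsrc : x % q = 0 ∧ y % q = 0 ∧ x ≠ 0 ∧ y ≠ 0
  · rw [ryuoGrundy_of_corner hsrc, ryuoGrundy_of_not_corner (by omega), hsrc.2.1,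
      blockNim_zero_right]
    omega
  rw [ryuoGrundy_of_not_corner hsrc]
  by_cases htgt : (x - s) % q = 0 ∧ y % q = 0 ∧ x - s ≠ 0 ∧ y ≠ 0
  · rw [ryuoGrundy_of_corner htgt, htgt.2.1, blockNim_zero_right]
    omega
  rw [ryuoGrundy_of_not_corner htgt]
  intro h
  have := blockNim_left_injective hp _ h
  omega

theorem ryuoGrundy_sub_sub_ne {s t : ℕ} (hq : 2 ≤ q) (hqp : q % p = 1) (hs : 0 < s) (hsx : s ≤ x)
    (ht : 0 < t) (hty : t ≤ y) (hst : s + t < p) :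
    ryuoGrundy p q (x - s) (y - t) ≠ ryuoGrundy p q x y := by
  have hpq := lt_of_mod_eq_one hq hqp
  have hq1 : q ≡ 1 [MOD p] := by rw [Nat.ModEq, hqp, Nat.mod_eq_of_lt (by omega)]
  have hx := sub_mod_add_eq hsx (by omega : s ≤ q)
  have hy := sub_mod_add_eq hty (by omega : t ≤ q)
  have ha' := Nat.mod_lt (x - s) (by omega : 0 < q)
  have hb' := Nat.mod_lt (y - t) (by omega : 0 < q)
  intro h
  have hmod := congrArg (· % p) h
  by_cases htgt : (x - s) % q = 0 ∧ (y - t) % q = 0 ∧ x - s ≠ 0 ∧ y - t ≠ 0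
  · rw [ryuoGrundy_of_corner htgt, ryuoGrundy_of_not_corner (by omega), blockNim_mod, hqp,
      show x % q + y % q = s + t by omega, Nat.mod_eq_of_lt hst] at hmod
    omega
  rw [ryuoGrundy_of_not_corner htgt, blockNim_mod] at hmod
  by_cases hsrc : x % q = 0 ∧ y % q = 0 ∧ x ≠ 0 ∧ y ≠ 0
  · rw [ryuoGrundy_of_corner hsrc, hqp] at hmod
    have h1 : (x - s) % q + (y - t) % q ≡ 1 [MOD p] := by
      rw [Nat.ModEq, hmod, Nat.mod_eq_of_lt (by omega)]
    have h2 : 1 + (s + t) ≡ 1 + 1 [MOD p] := by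
      have hwrap : (x - s) % q + (y - t) % q + (s + t) = q + q := by omega
      exact (h1.add_right (s + t)).symm.trans (hwrap ▸ hq1.add hq1)
    have := (Nat.ModEq.add_left_cancel' 1 h2).eq_of_lt_of_lt (by omega) (by omega)
    omega
  rw [ryuoGrundy_of_not_corner hsrc, blockNim_mod] at hmod
  obtain ⟨C, hC, hsum⟩ :
      ∃ C ≤ 2, (x - s) % q + (y - t) % q + (s + t) = x % q + y % q + C * q := by
    rcases hx with hx | hx <;> rcases hy with hy | hy
    exacts [⟨0, by norm_num, by omega⟩, ⟨1, by norm_num, by omega⟩, ⟨1, by norm_num, by omega⟩,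
      ⟨2, le_rfl, by omega⟩]
  have h2 : x % q + y % q + (s + t) ≡ x % q + y % q + C [MOD p] := by
    refine (Nat.ModEq.add_right (s + t) hmod.symm).trans ?_
    rw [hsum]
    simpa using (hq1.mul_left C).add_left (x % q + y % q)
  have hC' : s + t = C := (Nat.ModEq.add_left_cancel' _ h2).eq_of_lt_of_lt (by omega) (by omega)
  obtain rfl : C = 2 := by omega
  omega

theorem ryuoGrundy_ne_of_mem_resMove (hq : 2 ≤ q) (hqp : q % p = 1) {z : ℕ × ℕ}
    (hz : z ∈ resMove p q q (x, y)) : ryuoGrundy p q z.1 z.2 ≠ ryuoGrundy p q x y := by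
  have hp : 0 < p := Nat.pos_of_ne_zero (by rintro rfl; simp at hqp; omega)
  rcases hz with (⟨s, hs, hsx, hsq, rfl⟩ | ⟨t, ht, hty, htq, rfl⟩) |
    ⟨s, t, hs, hsx, ht, hty, hst, rfl⟩
  · exact ryuoGrundy_sub_left_ne hp hs hsx (by omega)
  · rw [ryuoGrundy_comm, ryuoGrundy_comm p q x]
    exact ryuoGrundy_sub_left_ne hp ht hty (by omega)
  · exact ryuoGrundy_sub_sub_ne hq hqp hs hsx ht hty (by omega)

end RyuoGrundy

section Reachability

variable {p q x y w : ℕ}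

theorem exists_move_ryuoGrundy_eq_zero_of_wrap (hp : 0 < p) (hqp : q % p = 1) (hy : q ≤ y)
    (hb : y % q < blockNimPreimage p (x % q) 0) :
    ∃ r ∈ resMove p q q (x, y), ryuoGrundy p q r.1 r.2 = 0 := by
  have hq : 0 < q := Nat.pos_of_ne_zero (by rintro rfl; simp at hqp)
  set z := blockNimPreimage p (x % q) 0 with hz
  have hzq : z < q := blockNimPreimage_zero_lt hp hqp (Nat.mod_lt x hq)
  have hres : (y - (y % q + q - z)) % q = z := by
    rw [sub_mod_of_mod_lt (by omega) (by omega) (by omega)]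
    omega
  refine ⟨(x, y - (y % q + q - z)), ?_, ?_⟩
  · simpa using sub_mem_resMove (p := p) (x := x) (s := 0) (by omega) (Nat.zero_le x) (by omega)
      hq (by omega) (.inl rfl)
  · dsimp only
    rw [ryuoGrundy_of_not_corner (by omega), hres, hz, blockNim_comm, blockNim_blockNimPreimage hp]

theorem exists_move_ryuoGrundy_eq_zero (hp : 0 < p) (hqp : q % p = 1) (hx : q ≤ x) (hy : q ≤ y)
    (hne : x % q ≠ 0 ∨ y % q ≠ 0) (hsmall : x % q = 0 ∨ y % q = 0 ∨ x % q + y % q < p) :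
    ∃ r ∈ resMove p q q (x, y), ryuoGrundy p q r.1 r.2 = 0 := by
  by_cases ha : x % q = 0
  · obtain ⟨r, hr, hval⟩ := exists_move_ryuoGrundy_eq_zero_of_wrap (x := y) hp hqp hx
      (lt_blockNimPreimage_zero hp (by omega) (.inl ha))
    exact ⟨r.swap, swap_mem_resMove hr, by rw [Prod.fst_swap, Prod.snd_swap, ryuoGrundy_comm, hval]⟩
  · exact exists_move_ryuoGrundy_eq_zero_of_wrap hp hqp hy
      (lt_blockNimPreimage_zero hp (by omega) (by omega))

theorem exists_move_ryuoGrundy_eq_of_corner (hp : 3 ≤ p) (hq : 2 ≤ q) (hqp : q % p = 1)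
    (hc : x % q = 0 ∧ y % q = 0 ∧ x ≠ 0 ∧ y ≠ 0) (hw : w < q) :
    ∃ r ∈ resMove p q q (x, y), ryuoGrundy p q r.1 r.2 = w := by
  obtain ⟨ha, hb, hx0, hy0⟩ := hc
  have hx := le_of_mod_eq_zero_of_ne_zero ha hx0
  have hy := le_of_mod_eq_zero_of_ne_zero hb hy0
  have hpq := lt_of_mod_eq_one hq hqp
  rcases Nat.eq_zero_or_pos w with rfl | hw0
  · have hx1 : (x - 1) % q = q - 1 := by
      rw [sub_mod_of_mod_lt (by omega) (by omega) (by omega)]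
      omega
    have hy1 : (y - 1) % q = q - 1 := by
      rw [sub_mod_of_mod_lt (by omega) (by omega) (by omega)]
      omega
    have hq1 : (q - 1) % p = 0 :=
      Nat.sub_mod_eq_zero_of_mod_eq (by rw [hqp, Nat.mod_eq_of_lt (by omega)])
    refine ⟨(x - 1, y - 1), sub_mem_resMove (by omega) (by omega) (by omega) (by omega) (by omega)
      (.inr (.inr (by omega))), ?_⟩
    dsimp only
    rw [ryuoGrundy_of_not_corner (by omega), hx1, hy1, blockNim_eq_iff (by omega), Nat.xor_self,
      Nat.add_mod, hq1]
    simp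
  · have hres : (x - (q - w)) % q = w := by
      rw [sub_mod_of_mod_lt (by omega) (by omega) (by omega)]
      omega
    have hmem : (x - (q - w), y) ∈ resMove p q q (x, y) := by
      simpa using sub_mem_resMove (p := p) (y := y) (t := 0) (by omega) (by omega) (Nat.zero_le y)
        (by omega) (by omega) (.inr (.inl rfl))
    refine ⟨_, hmem, ?_⟩
    dsimp only
    rw [ryuoGrundy_of_not_corner (by omega), hres, hb, blockNim_zero_right]

theorem exists_move_ryuoGrundy_eq_of_lt_blockNim (hp : 0 < p) (hqp : q % p = 1)
    (hw : w < blockNim p (x % q) (y % q)) :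
    ∃ r ∈ resMove p q q (x, y), ryuoGrundy p q r.1 r.2 = w := by
  have hq : 0 < q := Nat.pos_of_ne_zero (by rintro rfl; simp at hqp)
  have ha := Nat.mod_lt x hq
  have hb := Nat.mod_lt y hq
  obtain ⟨a', ha', b', hb', hshape, hval⟩ := exists_blockNim_eq_of_lt hp hw
  have hresx : (x - (x % q - a')) % q = a' := by rw [sub_mod_of_le_mod (by omega)]; omega
  have hresy : (y - (y % q - b')) % q = b' := by rw [sub_mod_of_le_mod (by omega)]; omega
  have hst : 0 < x % q - a' + (y % q - b') := by
    by_contra h0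
    obtain rfl : a' = x % q := by omega
    obtain rfl : b' = y % q := by omega
    exact hw.ne hval.symm
  have hmem := sub_mem_resMove (p := p) (q := q) (r := q) hst (Nat.le_trans (Nat.sub_le _ _)
    (Nat.mod_le x q)) (Nat.le_trans (Nat.sub_le _ _) (Nat.mod_le y q)) (by omega) (by omega)
    (by omega)
  by_cases hblk : a' = 0 ∧ b' = 0 ∧ x - (x % q - a') ≠ 0 ∧ y - (y % q - b') ≠ 0
  · -- residues `(0, 0)` away from the axes form a corner, so `w = 0` is reached by wrapping
    obtain rfl : w = 0 := by rw [← hval, hblk.1, hblk.2.1, blockNim_zero_right]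
    exact exists_move_ryuoGrundy_eq_zero hp hqp
      (Nat.le_trans (le_of_mod_eq_zero_of_ne_zero (hblk.1 ▸ hresx) hblk.2.2.1) (Nat.sub_le _ _))
      (Nat.le_trans (le_of_mod_eq_zero_of_ne_zero (hblk.2.1 ▸ hresy) hblk.2.2.2) (Nat.sub_le _ _))
      (by omega) (by omega)
  · refine ⟨_, hmem, ?_⟩
    dsimp only
    rw [ryuoGrundy_of_not_corner (by rw [hresx, hresy]; exact hblk), hresx, hresy, hval]

theorem exists_move_ryuoGrundy_eq (hp : 3 ≤ p) (hq : 2 ≤ q) (hqp : q % p = 1)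
    (hw : w < ryuoGrundy p q x y) : ∃ r ∈ resMove p q q (x, y), ryuoGrundy p q r.1 r.2 = w := by
  by_cases hc : x % q = 0 ∧ y % q = 0 ∧ x ≠ 0 ∧ y ≠ 0
  · rw [ryuoGrundy_of_corner hc] at hw
    exact exists_move_ryuoGrundy_eq_of_corner hp hq hqp hc hw
  · rw [ryuoGrundy_of_not_corner hc] at hw
    exact exists_move_ryuoGrundy_eq_of_lt_blockNim (by omega) hqp hw

end Reachability

theorem ryuoGrundy_eq_mex {p q : ℕ} (hp : 3 ≤ p) (hq : 2 ≤ q) (hqp : q % p = 1) (z : ℕ × ℕ) :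
    ryuoGrundy p q z.1 z.2 = mex ((fun r => ryuoGrundy p q r.1 r.2) '' resMove p q q z) := by
  obtain ⟨x, y⟩ := z
  refine (mex_eq_of_notMem_of_forall_lt_mem ?_ fun w hw =>
    exists_move_ryuoGrundy_eq hp hq hqp hw).symm
  rintro ⟨r, hr, hval⟩
  exact ryuoGrundy_ne_of_mem_resMove hq hqp hr hval

theorem stmt_13 (p q : ℕ) (hp : 3 ≤ p) (hq : 2 ≤ q) (hqp : q % p = 1)
    (G : ℕ × ℕ → ℕ) (hG : ∀ pos : ℕ × ℕ, G pos = mex (G '' resMove p q q pos)) :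
    ∀ x y : ℕ, G (x, y) =
      if x % q = 0 ∧ y % q = 0 ∧ x ≠ 0 ∧ y ≠ 0 then q
      else (x % q + y % q) % p + p * ((x % q / p) ^^^ (y % q / p)) := by
  have hGV := eq_of_forall_eq_mex_image (resMove p q q) (fun z => z.1 + z.2)
    (fun _ _ hz => resMove_sum_lt hz) hG (ryuoGrundy_eq_mex hp hq hqp)
  exact fun x y => congrFun hGV (x, y)
end

section
/- Fix integers n ≥ 1 and p ≥ 2. For all non-negative integers x₁, …, xₙ, the Grundy value of the position (x₁, …, xₙ) in n-dimensional Ryūō Nim for p is 𝒢(x₁, …, xₙ) = mod(x₁ + ⋯ + xₙ, p) + p·(⌊x₁/p⌋ ⊕ ⋯ ⊕ ⌊xₙ/p⌋). -/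
/-- Moves of `n`-dimensional Ryūō Nim for `p` from the position `x`: either
remove any positive number of tokens from a single heap, or remove at least one
token from each of at least two heaps, with the total number of removed tokens
at most `p - 1`. -/
def moveN (n p : ℕ) (x : Fin n → ℕ) : Set (Fin n → ℕ) :=
  {q | ∃ i : Fin n, q i < x i ∧ ∀ j : Fin n, j ≠ i → q j = x j} ∪
  {q | (∀ i : Fin n, q i ≤ x i) ∧
        2 ≤ (Finset.univ.filter fun i : Fin n => q i < x i).card ∧
        (∑ i : Fin n, (x i - q i)) ≤ p - 1}

/-- The nim-sum `a 0 ⊕ a 1 ⊕ ⋯ ⊕ a (n-1)`. -/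
def nimSum (n : ℕ) (a : Fin n → ℕ) : ℕ := (List.ofFn a).foldr (· ^^^ ·) 0

/-!
Write the claimed value as `F x = mod(Σ x, p) + p · (⊕ ⌊xᵢ/p⌋)`; it suffices to show that `F` obeys
the mex recursion, since that recursion has a unique solution (induction on the token count).
No move preserves `F`: a single-heap move that keeps `Σ x` modulo `p` removes a positive multiple
of `p` tokens, so it changes exactly one quotient `⌊xᵢ/p⌋` and hence the nim-sum; a multi-heap
move removes between `1` and `p - 1` tokens, so it changes `Σ x` modulo `p`.
Every smaller value `v` is reached: if `⌊v/p⌋` equals the nim-sum, remove `mod(Σ x, p) - mod(v, p)`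
tokens from the residues `mod(xᵢ, p)` only; otherwise Bouton's move lowers one quotient to make the
nim-sum `⌊v/p⌋`, and the residue of that heap is chosen to fix `Σ x` modulo `p`.
-/

open Function Finset

theorem mex_eq_of_forall_lt_mem {S : Set ℕ} {m : ℕ} (hm : m ∉ S) (hlt : ∀ k < m, k ∈ S) :
    mex S = m :=
  le_antisymm (Nat.sInf_le hm) (le_csInf ⟨m, hm⟩ fun _ hk => not_lt.1 fun h => hk (hlt _ h))

theorem eq_of_forall_eq_mex {α : Type*} (μ : α → ℕ) {move : α → Set α}
    (hμ : ∀ x, ∀ y ∈ move x, μ y < μ x) {G F : α → ℕ}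
    (hG : ∀ x, G x = mex (G '' move x)) (hF : ∀ x, F x = mex (F '' move x)) : G = F := by
  funext x
  induction x using (measure μ).wf.induction with
  | _ x ih => rw [hG, hF, Set.image_congr fun y hy => ih y (hμ x y hy)]

theorem nimSum_eq_fold (n : ℕ) (a : Fin n → ℕ) :
    nimSum n a = (univ : Finset (Fin n)).fold (β := ℕ) (· ^^^ ·) 0 a := by
  rw [nimSum, List.ofFn_eq_map, ← Multiset.coe_fold_r, ← Multiset.map_coe, Finset.fold,
    Fin.univ_def]

theorem nimSum_update (n : ℕ) (a : Fin n → ℕ) (i : Fin n) (c : ℕ) :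
    nimSum n (update a i c) = nimSum n a ^^^ a i ^^^ c := by
  classical
  have hi : i ∉ univ.erase i := notMem_erase i _
  rw [nimSum_eq_fold, nimSum_eq_fold, ← insert_erase (mem_univ i), fold_insert hi,
    fold_insert hi, fold_congr fun j hj => update_of_ne (ne_of_mem_erase hj) c a,
    update_self, Nat.xor_comm c, Nat.xor_comm (a i), xor_cancel_right]

theorem nimSum_update_eq_self_iff {n : ℕ} {a : Fin n → ℕ} {i : Fin n} {c : ℕ} :
    nimSum n (update a i c) = nimSum n a ↔ c = a i := by
  rw [nimSum_update, xor_assoc]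
  nth_rw 2 [← xor_zero (nimSum n a)]
  rw [Nat.xor_right_injective.eq_iff, xor_eq_zero_iff, eq_comm]

theorem exists_xor_lt_of_lt_fold_xor {ι : Type*} [DecidableEq ι] (s : Finset ι) (a : ι → ℕ)
    {b : ℕ} (hb : b < s.fold (β := ℕ) (· ^^^ ·) 0 a) :
    ∃ i ∈ s, a i ^^^ (s.fold (β := ℕ) (· ^^^ ·) 0 a ^^^ b) < a i := by
  induction s using Finset.induction_on generalizing b with
  | empty => simp at hb
  | insert j s hj ih =>
    rw [fold_insert hj] at hb ⊢
    rcases Nat.lt_xor_cases hb with h | h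
    · refine ⟨j, mem_insert_self j s, ?_⟩
      rwa [Nat.xor_assoc, xor_cancel_left, Nat.xor_comm]
    · obtain ⟨i, hi, hlt⟩ := ih h
      refine ⟨i, mem_insert_of_mem hi, ?_⟩
      have hrearrange : s.fold (β := ℕ) (· ^^^ ·) 0 a ^^^ (b ^^^ a j)
          = a j ^^^ s.fold (β := ℕ) (· ^^^ ·) 0 a ^^^ b := by ac_rfl
      rwa [← hrearrange]

theorem exists_lt_nimSum_update_eq {n : ℕ} {a : Fin n → ℕ} {b : ℕ} (hb : b < nimSum n a) :
    ∃ i, ∃ c < a i, nimSum n (update a i c) = b := by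
  classical
  rw [nimSum_eq_fold] at hb
  obtain ⟨i, -, hlt⟩ := exists_xor_lt_of_lt_fold_xor univ a hb
  refine ⟨i, _, hlt, ?_⟩
  rw [nimSum_update, nimSum_eq_fold, Nat.xor_assoc, xor_cancel_left, xor_cancel_left]

theorem sum_update_add_apply {ι M : Type*} [Fintype ι] [DecidableEq ι] [AddCommMonoid M]
    (x : ι → M) (i : ι) (b : M) : ∑ j, update x i b j + x i = ∑ j, x j + b := by
  rw [sum_update_of_mem (mem_univ i), ← add_sum_erase univ x (mem_univ i),
    sdiff_singleton_eq_erase]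
  abel

theorem exists_le_sum_eq {ι : Type*} [Fintype ι] (c : ι → ℕ) {t : ℕ} (ht : t ≤ ∑ i, c i) :
    ∃ s ≤ c, ∑ i, s i = t := by
  classical
  induction t with
  | zero => exact ⟨0, fun _ => Nat.zero_le _, by simp⟩
  | succ t ih =>
    obtain ⟨s, hs, hsum⟩ := ih (by omega)
    obtain ⟨i, hi⟩ : ∃ i, s i < c i := by
      by_contra! h
      rw [le_antisymm hs h] at hsum
      omega
    refine ⟨update s i (s i + 1), update_le_iff.2 ⟨hi, fun j _ => hs j⟩, ?_⟩
    have := sum_update_add_apply s i (s i + 1)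
    omega

theorem Nat.exists_lt_add_mod_eq {p : ℕ} (hp : 0 < p) (a v : ℕ) :
    ∃ c < p, (a + c) % p = v % p := by
  have : NeZero p := ⟨hp.ne'⟩
  refine ⟨((v : ZMod p) - a).val, ZMod.val_lt _, ?_⟩
  rw [← ZMod.natCast_eq_natCast_iff', Nat.cast_add, ZMod.natCast_zmod_val, add_sub_cancel]

theorem Nat.sub_div_eq_of_le_mod {a b p : ℕ} (h : b ≤ a % p) : (a - b) / p = a / p := by
  rcases p.eq_zero_or_pos with rfl | hp
  · simp
  have ha := Nat.div_add_mod a p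
  have hsplit : a - b = (a % p - b) + p * (a / p) := by omega
  rw [hsplit, Nat.add_mul_div_left _ _ hp, Nat.div_eq_of_lt (by have := Nat.mod_lt a hp; omega),
    zero_add]

section Moves

variable {n p : ℕ} {x q : Fin n → ℕ}

theorem update_mem_moveN {i : Fin n} {b : ℕ} (hb : b < x i) : update x i b ∈ moveN n p x :=
  Or.inl ⟨i, by rwa [update_self], fun _ hj => update_of_ne hj b x⟩

theorem mem_moveN_of_lt (hlt : q < x) (hsum : ∑ i, (x i - q i) ≤ p - 1) : q ∈ moveN n p x := by
  classical
  obtain ⟨hle, i, hi⟩ := Pi.lt_def.1 hlt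
  by_cases hcard : 2 ≤ (univ.filter fun j => q j < x j).card
  · exact Or.inr ⟨hle, hcard, hsum⟩
  · have huniq : ∀ j, q j < x j → j = i := fun j hj => by
      by_contra hji
      exact hcard (one_lt_card.2 ⟨j, by simpa using hj, i, by simpa using hi, hji⟩)
    exact Or.inl ⟨i, hi, fun j hj => (hle j).antisymm (not_lt.1 fun h => hj (huniq j h))⟩

theorem mem_moveN_cases (hq : q ∈ moveN n p x) :
    (∃ i, ∃ b < x i, q = update x i b) ∨ (q < x ∧ ∑ i, (x i - q i) ≤ p - 1) := by
  classical
  rcases hq with ⟨i, hi, heq⟩ | ⟨hle, hcard, hsum⟩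
  · refine Or.inl ⟨i, q i, hi, funext fun j => ?_⟩
    rcases eq_or_ne j i with rfl | hj
    · rw [update_self]
    · rw [update_of_ne hj, heq j hj]
  · obtain ⟨i, hi⟩ := card_pos.1 (lt_of_lt_of_le two_pos hcard)
    exact Or.inr ⟨Pi.lt_def.2 ⟨hle, i, (mem_filter.1 hi).2⟩, hsum⟩

theorem lt_of_mem_moveN (hq : q ∈ moveN n p x) : q < x := by
  rcases mem_moveN_cases hq with ⟨i, b, hb, rfl⟩ | ⟨hlt, -⟩
  · exact update_lt_self_iff.2 hb
  · exact hlt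

theorem sum_lt_sum_of_mem_moveN (hq : q ∈ moveN n p x) : ∑ i, q i < ∑ i, x i :=
  Fintype.sum_strictMono (lt_of_mem_moveN hq)

end Moves

def ryuoValue (n p : ℕ) (x : Fin n → ℕ) : ℕ :=
  (∑ i, x i) % p + p * nimSum n (fun i => x i / p)

section Value

variable {n p : ℕ} {x q : Fin n → ℕ}

theorem ryuoValue_mod (hp : 0 < p) : ryuoValue n p x % p = (∑ i, x i) % p := by
  rw [ryuoValue, Nat.add_mul_mod_self_left, Nat.mod_eq_of_lt (Nat.mod_lt _ hp)]

theorem ryuoValue_div (hp : 0 < p) : ryuoValue n p x / p = nimSum n (fun i => x i / p) := by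
  rw [ryuoValue, Nat.add_mul_div_left _ _ hp, Nat.div_eq_of_lt (Nat.mod_lt _ hp), zero_add]

theorem ryuoValue_eq_iff (hp : 0 < p) {v : ℕ} :
    ryuoValue n p x = v ↔ (∑ i, x i) % p = v % p ∧ nimSum n (fun i => x i / p) = v / p := by
  constructor
  · rintro rfl
    exact ⟨(ryuoValue_mod hp).symm, (ryuoValue_div hp).symm⟩
  · rintro ⟨hmod, hdiv⟩
    rw [ryuoValue, hmod, hdiv, Nat.mod_add_div]

theorem ryuoValue_update_ne (hp : 0 < p) {i : Fin n} {b : ℕ} (hb : b < x i) :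
    ryuoValue n p (update x i b) ≠ ryuoValue n p x := by
  classical
  intro h
  obtain ⟨hmod, hdiv⟩ := (ryuoValue_eq_iff hp).1 h
  rw [ryuoValue_mod hp] at hmod
  have hfloor : (fun j => update x i b j / p) = update (fun j => x j / p) i (b / p) :=
    comp_update (· / p) x i b
  rw [ryuoValue_div hp, hfloor, nimSum_update_eq_self_iff] at hdiv
  have hmod' : b % p = x i % p := by
    have := Nat.ModEq.add_right (x i) hmod
    rw [sum_update_add_apply] at this
    exact Nat.ModEq.add_left_cancel' _ this
  have hb' := Nat.div_add_mod b p
  rw [hdiv, hmod', Nat.div_add_mod] at hb'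
  omega

theorem ryuoValue_ne_of_lt (hp : 0 < p) (hlt : q < x) (hsum : ∑ i, (x i - q i) < p) :
    ryuoValue n p q ≠ ryuoValue n p x := by
  intro h
  have hmod := ((ryuoValue_eq_iff hp).1 h).1
  rw [ryuoValue_mod hp] at hmod
  have hdiff : ∑ i, (x i - q i) = ∑ i, x i - ∑ i, q i := sum_tsub_distrib _ fun i _ => hlt.le i
  have hpos : ∑ i, q i < ∑ i, x i := Fintype.sum_strictMono hlt
  have hdvd := Nat.sub_mod_eq_zero_of_mod_eq hmod.symm
  rw [← hdiff, Nat.mod_eq_of_lt hsum] at hdvd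
  omega

theorem ryuoValue_notMem_image (hp : 0 < p) : ryuoValue n p x ∉ ryuoValue n p '' moveN n p x := by
  rintro ⟨q, hq, hqx⟩
  rcases mem_moveN_cases hq with ⟨i, b, hb, rfl⟩ | ⟨hlt, hsum⟩
  · exact ryuoValue_update_ne hp hb hqx
  · exact ryuoValue_ne_of_lt hp hlt (by omega) hqx

theorem exists_mem_moveN_ryuoValue_eq_of_div_eq (hp : 0 < p) {v : ℕ} (hv : v < ryuoValue n p x)
    (hdiv : v / p = nimSum n (fun i => x i / p)) : ∃ q ∈ moveN n p x, ryuoValue n p q = v := by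
  have hres : v % p < (∑ i, x i) % p := by
    rw [ryuoValue, ← Nat.mod_add_div v p, hdiv] at hv
    omega
  have ht : (∑ i, x i) % p - v % p ≤ ∑ i, x i % p :=
    (Nat.sub_le _ _).trans (sum_nat_mod univ p x ▸ Nat.mod_le _ _)
  obtain ⟨s, hs, hssum⟩ := exists_le_sum_eq (fun i => x i % p) ht
  have hsx : s ≤ x := fun i => (hs i).trans (Nat.mod_le _ _)
  refine ⟨x - s, mem_moveN_of_lt ?_ ?_, (ryuoValue_eq_iff hp).2 ⟨?_, ?_⟩⟩
  · obtain ⟨i, -, hi⟩ := exists_ne_zero_of_sum_ne_zero (show ∑ i, s i ≠ 0 by omega)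
    have hi : 0 < s i := Nat.pos_of_ne_zero hi
    exact Pi.lt_def.2 ⟨tsub_le_self, i, tsub_lt_self (hi.trans_le (hsx i)) hi⟩
  · have hsum_s : ∑ i, (x i - (x - s) i) = ∑ i, s i :=
      sum_congr rfl fun i _ => tsub_tsub_cancel_of_le (hsx i)
    have := Nat.mod_lt (∑ i, x i) hp
    omega
  · have hsub : ∑ i, (x - s) i = ∑ i, x i - ∑ i, s i := sum_tsub_distrib _ fun i _ => hsx i
    have hdecomp : ∑ i, (x - s) i = v % p + p * ((∑ i, x i) / p) := by
      have := Nat.mod_add_div (∑ i, x i) p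
      omega
    rw [hdecomp, Nat.add_mul_mod_self_left, Nat.mod_mod]
  · rw [hdiv]
    exact congrArg _ (funext fun i => Nat.sub_div_eq_of_le_mod (hs i))

theorem exists_update_ryuoValue_eq_of_div_lt (hp : 0 < p) {v : ℕ}
    (hdiv : v / p < nimSum n (fun i => x i / p)) :
    ∃ i, ∃ b < x i, ryuoValue n p (update x i b) = v := by
  classical
  obtain ⟨i, m, hm, hnim⟩ := exists_lt_nimSum_update_eq hdiv
  obtain ⟨c, hc, hcmod⟩ := Nat.exists_lt_add_mod_eq hp (∑ j, x j) (v + x i)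
  have hb : c + p * m < x i := by
    have h1 : p * (m + 1) ≤ p * (x i / p) := Nat.mul_le_mul_left p hm
    have h2 := Nat.div_add_mod (x i) p
    rw [mul_add_one] at h1
    omega
  refine ⟨i, c + p * m, hb, (ryuoValue_eq_iff hp).2 ⟨?_, ?_⟩⟩
  · have hsum : (∑ j, update x i (c + p * m) j + x i) % p = (v + x i) % p := by
      rw [sum_update_add_apply, ← add_assoc, Nat.add_mul_mod_self_left, hcmod]
    exact Nat.ModEq.add_right_cancel' _ hsum
  · have hfloor : (fun j => update x i (c + p * m) j / p)
        = update (fun j => x j / p) i ((c + p * m) / p) :=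
      comp_update (· / p) x i _
    rw [hfloor, Nat.add_mul_div_left _ _ hp, Nat.div_eq_of_lt hc, zero_add, hnim]

theorem mem_image_moveN_of_lt_ryuoValue (hp : 0 < p) {v : ℕ} (hv : v < ryuoValue n p x) :
    v ∈ ryuoValue n p '' moveN n p x := by
  have hdiv : v / p ≤ nimSum n (fun i => x i / p) :=
    ryuoValue_div hp ▸ Nat.div_le_div_right hv.le
  rcases hdiv.lt_or_eq with hlt | heq
  · obtain ⟨i, b, hb, hvb⟩ := exists_update_ryuoValue_eq_of_div_lt hp hlt
    exact ⟨_, update_mem_moveN hb, hvb⟩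
  · exact exists_mem_moveN_ryuoValue_eq_of_div_eq hp hv heq

theorem ryuoValue_eq_mex (hp : 0 < p) (x : Fin n → ℕ) :
    ryuoValue n p x = mex (ryuoValue n p '' moveN n p x) :=
  (mex_eq_of_forall_lt_mem (ryuoValue_notMem_image hp)
    fun _ hv => mem_image_moveN_of_lt_ryuoValue hp hv).symm

end Value

theorem stmt_17_general (n p : ℕ) (hp : 2 ≤ p)
    (G : (Fin n → ℕ) → ℕ)
    (hG : ∀ x : Fin n → ℕ, G x = mex (G '' moveN n p x)) :
    ∀ x : Fin n → ℕ,
      G x = (∑ i : Fin n, x i) % p + p * nimSum n (fun i => x i / p) :=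
  congrFun (eq_of_forall_eq_mex (fun x => ∑ i, x i) (fun _ _ => sum_lt_sum_of_mem_moveN) hG
    (ryuoValue_eq_mex (by omega)))

theorem stmt_17 (n p : ℕ) (hn : 1 ≤ n) (hp : 2 ≤ p)
    (G : (Fin n → ℕ) → ℕ)
    (hG : ∀ x : Fin n → ℕ, G x = mex (G '' moveN n p x)) :
    ∀ x : Fin n → ℕ,
      G x = (∑ i : Fin n, x i) % p + p * nimSum n (fun i => x i / p) :=
  stmt_17_general n p hp G hG
end
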